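/- arXiv:2602.18405 — 4 statements merged into one kernel-verified Lean document; each statement's English description precedes it below -/
import Mathlib

section
/- For the decision problem of choosing a distribution r ∈ Δ(Y) under the α-loss ℓ_α(y, r) = (α/(α−1))(1 − r(y)^{1−1/α}) with α > 0, α ≠ 1, the minimal Bayes risk over decision rules δ: T → Δ(Y) equals (α/(α−1))(1 − exp{((1−α)/α) H_α^A(Y|T)}), where H_α^A(Y|T) = (α/(1−α)) log Σ_t p_T(t) (Σ_y p_{Y|T}(y|t)^α)^{1/α} is the Arimoto conditional entropy; the optimal rule is δ*(t)(y) = p_{Y|T}(y|t)^α / Σ_{y'} p_{Y|T}(y'|t)^α. -/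
open BigOperators Finset

-- Hölder, case α > 1
lemma auxA {Y : Type} [Fintype Y] {α : ℝ} (hα : 1 < α)
    (w δ : Y → ℝ) (hw : ∀ y, 0 < w y) (hδ : ∀ y, 0 < δ y) (hs : ∑ y, δ y = 1) :
    ∑ y, w y * δ y ^ (1 - 1/α) ≤ (∑ y, w y ^ α) ^ (1/α) := by
  have hα0 : α ≠ 0 := by positivity
  have hα1 : α - 1 ≠ 0 := sub_ne_zero.2 (ne_of_gt hα)
  have hpq : Real.HolderConjugate α (α/(α-1)) := Real.HolderConjugate.conjExponent hα
  have h := Real.inner_le_Lp_mul_Lq_of_nonneg univ hpq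
    (f := w) (g := fun y => δ y ^ (1 - 1/α))
    (fun i _ => (hw i).le) (fun i _ => (Real.rpow_pos_of_pos (hδ i) _).le)
  have key : ∀ y : Y, (δ y ^ (1 - 1/α)) ^ (α/(α-1)) = δ y := by
    intro y
    rw [← Real.rpow_mul (hδ y).le]
    have : (1 - 1/α) * (α/(α-1)) = 1 := by field_simp
    rw [this, Real.rpow_one]
  simp only [key] at h
  rw [hs, Real.one_rpow, mul_one] at h
  exact h

-- Hölder, case α < 1
lemma auxB {Y : Type} [Fintype Y] {α : ℝ} (hα : 0 < α) (hα1 : α < 1)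
    (w δ : Y → ℝ) (hw : ∀ y, 0 < w y) (hδ : ∀ y, 0 < δ y) (hs : ∑ y, δ y = 1) :
    (∑ y, w y ^ α) ^ (1/α) ≤ ∑ y, w y * δ y ^ (1 - 1/α) := by
  have hα0 : α ≠ 0 := ne_of_gt hα
  have hne : Nonempty Y := by
    rcases isEmpty_or_nonempty Y with h | h
    · simp [Finset.univ_eq_empty] at hs
    · exact h
  simp only [one_div]
  have hgpos : ∀ y : Y, 0 < w y * δ y ^ (1 - α⁻¹) :=
    fun y => mul_pos (hw y) (Real.rpow_pos_of_pos (hδ y) _)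
  have hSpos : 0 < ∑ y, w y * δ y ^ (1 - α⁻¹) :=
    Finset.sum_pos (fun i _ => hgpos i) ⟨Classical.arbitrary Y, mem_univ _⟩
  have hpq : Real.HolderConjugate α⁻¹ (1-α)⁻¹ := Real.HolderConjugate.inv_one_sub_inv hα hα1
  have h := Real.inner_le_Lp_mul_Lq_of_nonneg univ hpq
    (f := fun y => (w y * δ y ^ (1 - α⁻¹)) ^ α) (g := fun y => δ y ^ (1-α))
    (fun i _ => Real.rpow_nonneg (hgpos i).le _)
    (fun i _ => Real.rpow_nonneg (hδ i).le _)
  have key1 : ∀ y : Y, (w y * δ y ^ (1 - α⁻¹)) ^ α * δ y ^ (1-α) = w y ^ α := by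
    intro y
    rw [Real.mul_rpow (hw y).le (Real.rpow_pos_of_pos (hδ y) _).le,
      ← Real.rpow_mul (hδ y).le, mul_assoc, ← Real.rpow_add (hδ y)]
    have : (1 - α⁻¹) * α + (1-α) = 0 := by field_simp; ring
    rw [this, Real.rpow_zero, mul_one]
  have key2 : ∀ y : Y, ((w y * δ y ^ (1 - α⁻¹)) ^ α) ^ α⁻¹ = w y * δ y ^ (1 - α⁻¹) := by
    intro y
    rw [← Real.rpow_mul (hgpos y).le, mul_inv_cancel₀ hα0, Real.rpow_one]
  have key3 : ∀ y : Y, (δ y ^ (1-α)) ^ (1-α)⁻¹ = δ y := by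
    intro y
    rw [← Real.rpow_mul (hδ y).le, mul_inv_cancel₀ (by linarith : (1:ℝ)-α ≠ 0), Real.rpow_one]
  simp only [one_div, inv_inv, key1, key2, key3] at h
  rw [hs, Real.one_rpow, mul_one] at h
  -- h : ∑ w^α ≤ S ^ α
  calc (∑ y, w y ^ α) ^ α⁻¹ ≤ ((∑ y, w y * δ y ^ (1 - α⁻¹)) ^ α) ^ α⁻¹ := by
        apply Real.rpow_le_rpow (Finset.sum_nonneg fun i _ => Real.rpow_nonneg (hw i).le _) h
          (by positivity)
    _ = _ := by
        rw [← Real.rpow_mul hSpos.le, mul_inv_cancel₀ hα0, Real.rpow_one]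

-- equality at the tilted posterior
lemma auxEq {Y : Type} [Fintype Y] {α : ℝ} (hα : 0 < α) (w : Y → ℝ) (hw : ∀ y, 0 < w y)
    (hne : Nonempty Y) :
    ∑ y, w y * (w y ^ α / ∑ y', w y' ^ α) ^ (1 - 1/α) = (∑ y, w y ^ α) ^ (1/α) := by
  have hα0 : α ≠ 0 := ne_of_gt hα
  set Z := ∑ y', w y' ^ α with hZ
  have hZpos : 0 < Z :=
    Finset.sum_pos (fun i _ => Real.rpow_pos_of_pos (hw i) _) ⟨Classical.arbitrary Y, mem_univ _⟩
  have key : ∀ y : Y, w y * (w y ^ α / Z) ^ (1 - 1/α) = w y ^ α / Z ^ (1 - 1/α) := by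
    intro y
    have h1 : α * (1 - 1/α) = α - 1 := by field_simp
    have h2 : w y * w y ^ (α - 1) = w y ^ α := by
      have h3 := (Real.rpow_add (hw y) 1 (α - 1)).symm
      rw [Real.rpow_one] at h3
      rw [h3]; norm_num
    rw [Real.div_rpow (Real.rpow_nonneg (hw y).le _) hZpos.le,
      ← Real.rpow_mul (hw y).le, h1, mul_div_assoc', h2]
  rw [Finset.sum_congr rfl fun y _ => key y, ← Finset.sum_div, ← hZ]
  calc Z / Z ^ (1 - 1/α) = Z ^ (1:ℝ) / Z ^ (1 - 1/α) := by rw [Real.rpow_one]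
    _ = Z ^ ((1:ℝ) - (1 - 1/α)) := (Real.rpow_sub hZpos _ _).symm
    _ = Z ^ (1/α) := by ring_nf

/-- Under the α-loss, the minimal Bayes risk over rules `δ : T → Δ(Y)`
equals `(α/(α-1))(1 - exp{((1-α)/α) H_α^A(Y|T)})` where `H_α^A(Y|T)` is the Arimoto
conditional entropy, achieved by the α-tilted posterior. -/
theorem stmt_5 {Y T : Type} [Fintype Y] [Fintype T]
    (α : ℝ) (hα : 0 < α) (hα1 : α ≠ 1)
    (p : Y → T → ℝ) (hp0 : ∀ y t, 0 < p y t)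
    (hps : ∑ y, ∑ t, p y t = 1)
    (pT : T → ℝ) (hpT : ∀ t, pT t = ∑ y, p y t)
    (HαA : ℝ)
    (hHαA : HαA = α / (1 - α) *
        Real.log (∑ t, pT t * (∑ y, (p y t / pT t) ^ α) ^ (1 / α)))
    (δs : T → Y → ℝ)
    (hδs : ∀ t y, δs t y = (p y t / pT t) ^ α / ∑ y', (p y' t / pT t) ^ α) :
    (∀ δ : T → Y → ℝ, (∀ t y, 0 < δ t y) → (∀ t, ∑ y, δ t y = 1) →
        α / (α - 1) * (1 - Real.exp ((1 - α) / α * HαA))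
          ≤ ∑ t, ∑ y, p y t * (α / (α - 1) * (1 - δ t y ^ (1 - 1 / α)))) ∧
    ∑ t, ∑ y, p y t * (α / (α - 1) * (1 - δs t y ^ (1 - 1 / α)))
      = α / (α - 1) * (1 - Real.exp ((1 - α) / α * HαA)) := by
  have hα0 : α ≠ 0 := ne_of_gt hα
  have h1α : (1:ℝ) - α ≠ 0 := fun h => hα1 (by linarith)
  have hneY : Nonempty Y := by
    rcases isEmpty_or_nonempty Y with h | h
    · simp [Finset.univ_eq_empty] at hps
    · exact h
  have hneT : Nonempty T := by
    rcases isEmpty_or_nonempty T with h | h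
    · simp [Finset.univ_eq_empty] at hps
    · exact h
  have hpT0 : ∀ t, 0 < pT t := fun t => by
    rw [hpT t]
    exact Finset.sum_pos (fun y _ => hp0 y t) ⟨Classical.arbitrary Y, Finset.mem_univ _⟩
  set Z : T → ℝ := fun t => ∑ y, p y t ^ α with hZ
  have hZpos : ∀ t, 0 < Z t := fun t =>
    Finset.sum_pos (fun y _ => Real.rpow_pos_of_pos (hp0 y t) _)
      ⟨Classical.arbitrary Y, Finset.mem_univ _⟩
  set M : ℝ := ∑ t, Z t ^ (1/α) with hM
  have hMpos : 0 < M :=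
    Finset.sum_pos (fun t _ => Real.rpow_pos_of_pos (hZpos t) _)
      ⟨Classical.arbitrary T, Finset.mem_univ _⟩
  -- the sum in HαA equals M
  have hMeq : ∑ t, pT t * (∑ y, (p y t / pT t) ^ α) ^ (1/α) = M := by
    apply Finset.sum_congr rfl
    intro t _
    have h1 : ∀ y : Y, (p y t / pT t) ^ α = p y t ^ α / pT t ^ α := fun y =>
      Real.div_rpow (hp0 y t).le (hpT0 t).le α
    have h2 : (∑ y, (p y t / pT t) ^ α) = Z t / pT t ^ α := by
      rw [Finset.sum_congr rfl fun y _ => h1 y, ← Finset.sum_div]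
    rw [h2, Real.div_rpow (hZpos t).le (Real.rpow_nonneg (hpT0 t).le _),
      ← Real.rpow_mul (hpT0 t).le, mul_one_div, div_self hα0, Real.rpow_one,
      mul_div_cancel₀ _ (ne_of_gt (hpT0 t))]
  -- the exponential equals M
  have hexp : Real.exp ((1 - α) / α * HαA) = M := by
    rw [hHαA, hMeq]
    have : (1 - α) / α * (α / (1 - α) * Real.log M) = Real.log M := by
      field_simp
    rw [this, Real.exp_log hMpos]
  -- risk rewriting
  have hsum1 : ∑ t, ∑ y, p y t = 1 := by rw [Finset.sum_comm]; exact hps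
  have hrisk : ∀ d : T → Y → ℝ,
      ∑ t, ∑ y, p y t * (α / (α - 1) * (1 - d t y ^ (1 - 1/α)))
        = α / (α - 1) * (1 - ∑ t, ∑ y, p y t * d t y ^ (1 - 1/α)) := by
    intro d
    have h1 : ∀ t : T, ∑ y, p y t * (α / (α - 1) * (1 - d t y ^ (1 - 1/α)))
        = α / (α - 1) * (∑ y, p y t) - α / (α - 1) * ∑ y, p y t * d t y ^ (1 - 1/α) := by
      intro t
      rw [Finset.mul_sum, Finset.mul_sum, ← Finset.sum_sub_distrib]
      exact Finset.sum_congr rfl fun y _ => by ring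
    rw [Finset.sum_congr rfl fun t _ => h1 t, Finset.sum_sub_distrib,
      ← Finset.mul_sum, ← Finset.mul_sum, hsum1, mul_one]
    ring
  -- δs simplification
  have hδs' : ∀ t y, δs t y = p y t ^ α / Z t := by
    intro t y
    have h1 : ∀ y' : Y, (p y' t / pT t) ^ α = p y' t ^ α / pT t ^ α := fun y' =>
      Real.div_rpow (hp0 y' t).le (hpT0 t).le α
    rw [hδs t y, h1 y, Finset.sum_congr rfl fun y' _ => h1 y', ← Finset.sum_div]
    have h2 : pT t ^ α ≠ 0 := (Real.rpow_pos_of_pos (hpT0 t) _).ne'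
    have h3 : Z t ≠ 0 := (hZpos t).ne'
    have h4 : (∑ i, p i t ^ α) ≠ 0 := h3
    field_simp
    rfl
  -- equality part
  have heq : ∑ t, ∑ y, p y t * (δs t y) ^ (1 - 1/α) = M := by
    apply Finset.sum_congr rfl
    intro t _
    have := auxEq hα (fun y => p y t) (fun y => hp0 y t) hneY
    rw [Finset.sum_congr rfl fun y _ => by rw [hδs' t y]]
    exact this
  constructor
  · intro δ hδpos hδsum
    rw [hrisk δ, hexp]
    rcases lt_or_gt_of_ne hα1 with hlt | hgt
    · -- α < 1 : M ≤ S and coefficient ≤ 0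
      have hS : M ≤ ∑ t, ∑ y, p y t * δ t y ^ (1 - 1/α) :=
        Finset.sum_le_sum fun t _ =>
          auxB hα hlt (fun y => p y t) (δ t) (fun y => hp0 y t) (hδpos t) (hδsum t)
      have hc : α / (α - 1) ≤ 0 :=
        le_of_lt (div_neg_of_pos_of_neg hα (by linarith))
      exact mul_le_mul_of_nonpos_left (by linarith) hc
    · -- α > 1 : S ≤ M and coefficient ≥ 0
      have hS : ∑ t, ∑ y, p y t * δ t y ^ (1 - 1/α) ≤ M :=
        Finset.sum_le_sum fun t _ =>
          auxA hgt (fun y => p y t) (δ t) (fun y => hp0 y t) (hδpos t) (hδsum t)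
      have hc : 0 ≤ α / (α - 1) := le_of_lt (div_pos hα (by linarith))
      exact mul_le_mul_of_nonneg_left (by linarith) hc
  · rw [hrisk δs, heq, hexp]
end

section
/- For α ∈ (0,1) ∪ (1,∞) with α ≠ 1, the α-loss ℓ_α(y, r) = (α/(α−1))(1 − r(y)^{1−1/α}) is not a proper scoring rule: there exist a finite set Y and distributions p, r ∈ Δ(Y) such that E_{Y∼p}[ℓ_α(Y, r)] < E_{Y∼p}[ℓ_α(Y, p)]. -/
open BigOperators Set Filter Topology

/-!
Restrict to two outcomes with `p = (q, 1 - q)` and `r = (x, 1 - x)`. With `β = 1 - 1/α`, the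
derivative of `t ↦ α/(α-1) (1 - t^β)` is `-t^(-1/α)`, so the derivative in `x` of the expected
loss at `x = q` is `(1 - q)^β - q^β`, which is nonzero when `q ≠ 1/2`. Hence `x = q` is not even a
local minimiser, and some `x` near `q` gives a strictly smaller expected loss.
-/

noncomputable def alphaLoss (α t : ℝ) : ℝ := α / (α - 1) * (1 - t ^ (1 - 1 / α))

noncomputable def binaryAlphaRisk (α q x : ℝ) : ℝ :=
  q * alphaLoss α x + (1 - q) * alphaLoss α (1 - x)

lemma exists_mem_lt_of_hasDerivAt_ne_zero {f : ℝ → ℝ} {f' x : ℝ} {s : Set ℝ} (hs : s ∈ 𝓝 x)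
    (hf : HasDerivAt f f' x) (hf' : f' ≠ 0) : ∃ y ∈ s, f y < f x := by
  by_contra! h
  have hmin : IsLocalMin f x := Filter.eventually_of_mem hs h
  exact hf' (hmin.hasDerivAt_eq_zero hf)

section AlphaLoss

variable {α : ℝ} (hα : α ≠ 0) (hα1 : α ≠ 1)
include hα hα1

lemma hasDerivAt_alphaLoss {t : ℝ} (ht : t ≠ 0) :
    HasDerivAt (alphaLoss α) (-t ^ (-1 / α)) t := by
  have hderiv := ((Real.hasDerivAt_rpow_const (p := 1 - 1 / α) (Or.inl ht)).const_sub 1).const_mul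
    (α / (α - 1))
  refine hderiv.congr_deriv ?_
  have hα1' : α - 1 ≠ 0 := sub_ne_zero.mpr hα1
  rw [show 1 - 1 / α - 1 = -1 / α by ring]
  field_simp

lemma hasDerivAt_binaryAlphaRisk (q : ℝ) {x : ℝ} (hx0 : x ≠ 0) (hx1 : x ≠ 1) :
    HasDerivAt (binaryAlphaRisk α q) (-q * x ^ (-1 / α) + (1 - q) * (1 - x) ^ (-1 / α)) x := by
  have hflip : HasDerivAt (fun y => alphaLoss α (1 - y)) (-(1 - x) ^ (-1 / α) * -1) x :=
    (hasDerivAt_alphaLoss hα hα1 (sub_ne_zero.mpr hx1.symm)).comp x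
      ((hasDerivAt_id x).const_sub 1)
  refine (((hasDerivAt_alphaLoss hα hα1 hx0).const_mul q).add
    (hflip.const_mul (1 - q))).congr_deriv ?_
  ring

lemma exists_binaryAlphaRisk_lt {q : ℝ} (hq0 : 0 < q) (hq1 : q < 1) (hq : q ≠ 1 / 2) :
    ∃ x ∈ Ioo 0 1, binaryAlphaRisk α q x < binaryAlphaRisk α q q := by
  refine exists_mem_lt_of_hasDerivAt_ne_zero (isOpen_Ioo.mem_nhds ⟨hq0, hq1⟩)
    (hasDerivAt_binaryAlphaRisk hα hα1 q hq0.ne' hq1.ne) ?_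
  have hq1' : 0 < 1 - q := sub_pos.mpr hq1
  have hβ : 1 - 1 / α ≠ 0 := by
    intro h
    exact hα1 (by field_simp at h; linarith)
  have hpow : ∀ {t : ℝ}, 0 < t → t * t ^ (-1 / α) = t ^ (1 - 1 / α) := fun ht => by
    rw [sub_eq_add_neg, Real.rpow_add ht, Real.rpow_one, neg_div]
  rw [neg_mul, hpow hq0, hpow hq1', neg_add_eq_sub, sub_ne_zero, Ne,
    Real.rpow_left_inj hq1'.le hq0.le hβ]
  intro h
  exact hq (by linarith)

end AlphaLoss

/-- For every `α > 0`, `α ≠ 1`, the α-loss is not a proper scoring rule: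
there exist a finite set `Y` (of size `n`) and distributions `p, r` on it with
`E_{Y∼p}[ℓ_α(Y,r)] < E_{Y∼p}[ℓ_α(Y,p)]`. -/
theorem stmt_7 (α : ℝ) (hα : 0 < α) (hα1 : α ≠ 1) :
    ∃ (n : ℕ) (p r : Fin n → ℝ),
      (∀ y, 0 ≤ p y) ∧ (∑ y, p y = 1) ∧
      (∀ y, 0 ≤ r y) ∧ (∑ y, r y = 1) ∧
      ∑ y, p y * (α / (α - 1) * (1 - r y ^ (1 - 1 / α)))
        < ∑ y, p y * (α / (α - 1) * (1 - p y ^ (1 - 1 / α))) := by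
  obtain ⟨x, ⟨hx0, hx1⟩, hlt⟩ :=
    exists_binaryAlphaRisk_lt hα.ne' hα1 (q := 2 / 3) (by norm_num) (by norm_num) (by norm_num)
  refine ⟨2, ![2 / 3, 1 - 2 / 3], ![x, 1 - x], ?_, ?_, ?_, ?_, ?_⟩
  · intro y; fin_cases y <;> norm_num
  · simp [Fin.sum_univ_two]
  · intro y; fin_cases y <;> simp <;> linarith
  · simp [Fin.sum_univ_two]
  · simpa [Fin.sum_univ_two, binaryAlphaRisk, alphaLoss] using hlt
end

section
/- EVSI satisfies the data-processing inequality: if Y → T → W is a Markov chain on finite alphabets, then EVSI^ℓ(Y; W) ≤ EVSI^ℓ(Y; T). -/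
open BigOperators

/-- EVSI satisfies the data-processing inequality: if `Y → T → W` is a
Markov chain, then `EVSI^ℓ(Y;W) ≤ EVSI^ℓ(Y;T)`. -/
theorem stmt_11 {Y T W A : Type}
    [Fintype Y] [Fintype T] [Fintype W] [Fintype A] [Nonempty A]
    (p : Y → T → ℝ) (hp0 : ∀ y t, 0 ≤ p y t)
    (hps : ∑ y, ∑ t, p y t = 1)
    (κ : T → W → ℝ) (hκ0 : ∀ t w, 0 ≤ κ t w) (hκs : ∀ t, ∑ w, κ t w = 1)
    (q : Y → W → ℝ) (hq : ∀ y w, q y w = ∑ t, p y t * κ t w) -- Markov chain Y → T → W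
    (pY : Y → ℝ) (hpY : ∀ y, pY y = ∑ t, p y t)
    (pT : T → ℝ) (hpT : ∀ t, pT t = ∑ y, p y t)
    (pW : W → ℝ) (hpW : ∀ w, pW w = ∑ y, q y w)
    (ℓ : Y → A → ℝ) :
    (⨅ a : A, ∑ y, pY y * ℓ y a)
        - ∑ w, pW w * ⨅ a : A, ∑ y, (q y w / pW w) * ℓ y a
      ≤ (⨅ a : A, ∑ y, pY y * ℓ y a)
        - ∑ t, pT t * ⨅ a : A, ∑ y, (p y t / pT t) * ℓ y a := by
  have hq0 : ∀ y w, 0 ≤ q y w := fun y w => by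
    rw [hq]; exact Finset.sum_nonneg fun t _ => mul_nonneg (hp0 y t) (hκ0 t w)
  -- key normalization lemma
  have key : ∀ (c : ℝ) (r : Y → ℝ), 0 ≤ c → (∀ y, 0 ≤ r y) → c = ∑ y, r y →
      c * (⨅ a : A, ∑ y, (r y / c) * ℓ y a) = ⨅ a : A, ∑ y, r y * ℓ y a := by
    intro c r hc hr hcs
    rw [Real.mul_iInf_of_nonneg hc]
    congr 1; funext a
    rw [Finset.mul_sum]
    refine Finset.sum_congr rfl fun y _ => ?_
    rcases eq_or_lt_of_le hc with h0 | h0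
    · have : r y = 0 := by
        have := (Finset.sum_eq_zero_iff_of_nonneg (fun y _ => hr y)).mp
          (hcs ▸ h0.symm) y (Finset.mem_univ y)
        exact this
      simp [← h0, this]
    · field_simp
  have hpT0 : ∀ t, 0 ≤ pT t := fun t => by
    rw [hpT]; exact Finset.sum_nonneg fun y _ => hp0 y t
  have hpW0 : ∀ w, 0 ≤ pW w := fun w => by
    rw [hpW]; exact Finset.sum_nonneg fun y _ => hq0 y w
  have hT : ∑ t, pT t * ⨅ a : A, ∑ y, (p y t / pT t) * ℓ y a
      = ∑ t, ⨅ a : A, ∑ y, p y t * ℓ y a := by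
    refine Finset.sum_congr rfl fun t _ => key (pT t) (fun y => p y t) (hpT0 t)
      (fun y => hp0 y t) (hpT t)
  have hW : ∑ w, pW w * ⨅ a : A, ∑ y, (q y w / pW w) * ℓ y a
      = ∑ w, ⨅ a : A, ∑ y, q y w * ℓ y a := by
    refine Finset.sum_congr rfl fun w _ => key (pW w) (fun y => q y w) (hpW0 w)
      (fun y => hq0 y w) (hpW w)
  rw [hT, hW]
  have bdd : ∀ (f : A → ℝ), BddBelow (Set.range f) := fun f =>
    (Set.finite_range f).bddBelow
  have main : ∑ t, ⨅ a : A, ∑ y, p y t * ℓ y a ≤ ∑ w, ⨅ a : A, ∑ y, q y w * ℓ y a := by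
    calc ∑ t, ⨅ a : A, ∑ y, p y t * ℓ y a
        = ∑ w, ∑ t, κ t w * ⨅ a : A, ∑ y, p y t * ℓ y a := by
          rw [Finset.sum_comm]
          refine Finset.sum_congr rfl fun t _ => ?_
          rw [← Finset.sum_mul, hκs, one_mul]
      _ ≤ ∑ w, ⨅ a : A, ∑ y, q y w * ℓ y a := by
          refine Finset.sum_le_sum fun w _ => ?_
          refine le_ciInf fun a => ?_
          have : ∑ y, q y w * ℓ y a = ∑ t, κ t w * ∑ y, p y t * ℓ y a := by
            simp_rw [hq, Finset.sum_mul, Finset.mul_sum]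
            rw [Finset.sum_comm]
            refine Finset.sum_congr rfl fun t _ => Finset.sum_congr rfl fun y _ => by ring
          rw [this]
          refine Finset.sum_le_sum fun t _ => ?_
          exact mul_le_mul_of_nonneg_left (ciInf_le (bdd _) a) (hκ0 t w)
  linarith
end

section
/- Let H be a concave functional on Δ(Y) and define H(Y|T) = E_T[H(p_{Y|T}(·|T))] and I_H(Y;T) = H(p_Y) − H(Y|T). Then I_H satisfies the data-processing inequality: for any Markov chain Y → T → W on finite alphabets, I_H(Y; W) ≤ I_H(Y; T). -/
open BigOperators

/-- For concave `H` with averaging conditional entropy, the H-mutual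
information satisfies the data-processing inequality along a Markov chain `Y → T → W`:
`I_H(Y;W) ≤ I_H(Y;T)`. -/
theorem stmt_13 {Y T W : Type} [Fintype Y] [Fintype T] [Fintype W]
    (H : (Y → ℝ) → ℝ)
    (hH : ConcaveOn ℝ {q : Y → ℝ | (∀ y, 0 ≤ q y) ∧ ∑ y, q y = 1} H)
    (p : Y → T → ℝ) (hp0 : ∀ y t, 0 ≤ p y t)
    (hps : ∑ y, ∑ t, p y t = 1)
    (κ : T → W → ℝ) (hκ0 : ∀ t w, 0 ≤ κ t w) (hκs : ∀ t, ∑ w, κ t w = 1)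
    (q : Y → W → ℝ) (hq : ∀ y w, q y w = ∑ t, p y t * κ t w) -- Markov chain Y → T → W
    (pY : Y → ℝ) (hpY : ∀ y, pY y = ∑ t, p y t)
    (pT : T → ℝ) (hpT : ∀ t, pT t = ∑ y, p y t)
    (pW : W → ℝ) (hpW : ∀ w, pW w = ∑ y, q y w) :
    H pY - ∑ w, pW w * H (fun y => q y w / pW w)
      ≤ H pY - ∑ t, pT t * H (fun y => p y t / pT t) := by
  apply sub_le_sub_left
  -- per-w inequality: ∑ t, pT t * κ t w * H (post t) ≤ pW w * H (post_w)
  have hpT0 : ∀ t, 0 ≤ pT t := fun t => by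
    rw [hpT]; exact Finset.sum_nonneg fun y _ => hp0 y t
  have hq0 : ∀ y w, 0 ≤ q y w := fun y w => by
    rw [hq]; exact Finset.sum_nonneg fun t _ => mul_nonneg (hp0 y t) (hκ0 t w)
  have hpW0 : ∀ w, 0 ≤ pW w := fun w => by
    rw [hpW]; exact Finset.sum_nonneg fun y _ => hq0 y w
  -- p y t = 0 when pT t = 0
  have hpzero : ∀ t, pT t = 0 → ∀ y, p y t = 0 := by
    intro t ht y
    have := (Finset.sum_eq_zero_iff_of_nonneg (fun y _ => hp0 y t)).mp
      ((hpT t).symm.trans ht) y (Finset.mem_univ y)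
    exact this
  have hpWsum : ∀ w, ∑ t, pT t * κ t w = pW w := by
    intro w
    rw [hpW]
    simp only [hq, hpT, Finset.sum_mul]
    rw [Finset.sum_comm]
  have key : ∀ w, ∑ t, pT t * κ t w * H (fun y => p y t / pT t)
      ≤ pW w * H (fun y => q y w / pW w) := by
    intro w
    by_cases hw : pW w = 0
    · have hall : ∀ t ∈ Finset.univ, pT t * κ t w = 0 := by
        intro t _
        exact (Finset.sum_eq_zero_iff_of_nonneg
          (fun t _ => mul_nonneg (hpT0 t) (hκ0 t w))).mp ((hpWsum w).trans hw) t (Finset.mem_univ t)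
      rw [hw, zero_mul]
      rw [Finset.sum_eq_zero fun t ht => by rw [hall t ht, zero_mul]]
    · have hwpos : 0 < pW w := lt_of_le_of_ne (hpW0 w) (Ne.symm hw)
      set s := Finset.univ.filter (fun t => pT t ≠ 0) with hs
      have hjen := hH.le_map_sum (t := s)
        (w := fun t => pT t * κ t w / pW w)
        (p := fun t => fun y => p y t / pT t)
        (fun t _ => div_nonneg (mul_nonneg (hpT0 t) (hκ0 t w)) (hpW0 w))
        (by
          rw [← Finset.sum_div]
          rw [Finset.sum_filter_of_ne (fun t _ h => by
            intro ht; rw [ht, zero_mul] at h; exact h rfl)]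
          rw [hpWsum w, div_self hw])
        (fun t ht => by
          have htne : pT t ≠ 0 := (Finset.mem_filter.mp ht).2
          constructor
          · intro y; exact div_nonneg (hp0 y t) (hpT0 t)
          · rw [← Finset.sum_div, ← hpT, div_self htne])
      have hpoint : (∑ t ∈ s, (pT t * κ t w / pW w) • (fun y => p y t / pT t))
          = fun y => q y w / pW w := by
        funext y
        simp only [Finset.sum_apply, Pi.smul_apply, smul_eq_mul]
        rw [Finset.sum_filter_of_ne (fun t _ h => by
          intro ht; rw [ht] at h
          simp [hpzero t ht y] at h)]
        rw [hq, Finset.sum_div]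
        apply Finset.sum_congr rfl
        intro t _
        by_cases ht : pT t = 0
        · simp [ht, hpzero t ht y]
        · field_simp
      rw [hpoint] at hjen
      calc ∑ t, pT t * κ t w * H (fun y => p y t / pT t)
          = ∑ t ∈ s, pT t * κ t w * H (fun y => p y t / pT t) := by
            rw [Finset.sum_filter_of_ne (fun t _ h => by
              intro ht; rw [ht, zero_mul, zero_mul] at h; exact h rfl)]
        _ = pW w * ∑ t ∈ s, (pT t * κ t w / pW w) • H (fun y => p y t / pT t) := by
            rw [Finset.mul_sum]
            apply Finset.sum_congr rfl
            intro t _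
            simp only [smul_eq_mul]
            field_simp
        _ ≤ pW w * H (fun y => q y w / pW w) :=
            mul_le_mul_of_nonneg_left hjen (hpW0 w)
  calc ∑ t, pT t * H (fun y => p y t / pT t)
      = ∑ t, ∑ w, pT t * κ t w * H (fun y => p y t / pT t) := by
        apply Finset.sum_congr rfl
        intro t _
        rw [← Finset.sum_mul, ← Finset.mul_sum, hκs, mul_one]
    _ = ∑ w, ∑ t, pT t * κ t w * H (fun y => p y t / pT t) := Finset.sum_comm
    _ ≤ ∑ w, pW w * H (fun y => q y w / pW w) :=
        Finset.sum_le_sum fun w _ => key w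
end
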